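/- arXiv:2403.08603 — 3 statements merged into one kernel-verified Lean document; each statement's English description precedes it below -/
import Mathlib

section
/- For γ ∈ (0,∞) and θ > 0, the Mittag-Leffler-type asymptotics lim_{b→∞} b^{−1/γ} log ∑_{n=0}^∞ θ^n b^n / (n!)^γ = γ θ^{1/γ} holds. -/
open Filter
open scoped Topology

/-!
With `s = (θ b) ^ (1 / γ)` the `n`-th term is `(s ^ n / n!) ^ γ`, and
`b ^ (-1/γ) * log (∑ …) = θ ^ (1/γ) * log (∑ₙ (s ^ n / n!) ^ γ) / s`, so it suffices that the last
quotient tends to `γ` as `s → ∞`. Every term is at most `exp (γ s)` because `s ^ n / n! ≤ exp s`,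
and from `n ≈ 2 ^ (1/γ) s` on consecutive terms at least halve, so the sum is at most
`(2 ^ (1/γ) s + 3) exp (γ s)`. Conversely, Stirling's upper bound on `⌊s⌋!` makes the single term
`n = ⌊s⌋` at least `exp (γ (s - log s - 2))`. Both logarithmic corrections are `o(s)`.
-/

open Real
open scoped Nat

lemma log_factorial_le_stirling {n : ℕ} (hn : n ≠ 0) :
    log n ! ≤ n * log n - n + log n / 2 + 1 := by
  obtain ⟨k, rfl⟩ := Nat.exists_eq_succ_of_ne_zero hn
  have hle : Stirling.stirlingSeq (k + 1) ≤ Stirling.stirlingSeq 1 :=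
    Stirling.stirlingSeq'_antitone (Nat.zero_le k)
  have hlog := log_le_log (Stirling.stirlingSeq'_pos k) hle
  rw [Stirling.log_stirlingSeq_formula, Stirling.stirlingSeq_one, log_div (exp_pos 1).ne'
    (by positivity), log_exp, log_sqrt zero_le_two, log_mul two_ne_zero (by push_cast; positivity),
    log_div (by push_cast; positivity) (exp_pos 1).ne', log_exp] at hlog
  push_cast at hlog ⊢
  linarith

lemma sub_log_sub_two_le_log_pow_floor_div_factorial {s : ℝ} (hs : 1 ≤ s) :
    s - log s - 2 ≤ log (s ^ ⌊s⌋₊ / ⌊s⌋₊ !) := by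
  set m := ⌊s⌋₊
  have hm : 1 ≤ m := Nat.le_floor (by exact_mod_cast hs)
  have hm1 : (1 : ℝ) ≤ m := by exact_mod_cast hm
  have hms : (m : ℝ) ≤ s := Nat.floor_le (by linarith)
  have hsm : s < m + 1 := Nat.lt_floor_add_one s
  have hlog_ms : log m ≤ log s := log_le_log (by linarith) hms
  have hlog_m : 0 ≤ log m := log_nonneg hm1
  rw [log_div (by positivity) (by positivity), log_pow]
  nlinarith [log_factorial_le_stirling (Nat.one_le_iff_ne_zero.1 hm),
    mul_le_mul_of_nonneg_left hlog_ms (by linarith : (0 : ℝ) ≤ m)]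

section RatioHalf

variable {a : ℕ → ℝ} {N : ℕ}

lemma summable_of_ratio_le_half (ha : ∀ n, 0 ≤ a n)
    (hN : ∀ n, N ≤ n → a (n + 1) ≤ a n / 2) : Summable a := by
  refine summable_of_ratio_norm_eventually_le (r := 1 / 2) (by norm_num) ?_
  filter_upwards [eventually_ge_atTop N] with n hn
  rw [norm_of_nonneg (ha _), norm_of_nonneg (ha _)]
  linarith [hN n hn]

lemma le_geometric_of_ratio_le_half (hN : ∀ n, N ≤ n → a (n + 1) ≤ a n / 2) (k : ℕ) :
    a (k + N) ≤ a N * (1 / 2) ^ k := by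
  induction k with
  | zero => simp
  | succ k ih =>
    calc a (k + 1 + N) = a (k + N + 1) := by rw [add_right_comm]
      _ ≤ a (k + N) / 2 := hN _ (Nat.le_add_left N k)
      _ ≤ a N * (1 / 2) ^ (k + 1) := by rw [pow_succ]; linarith

lemma tsum_le_of_ratio_le_half (ha : ∀ n, 0 ≤ a n)
    (hN : ∀ n, N ≤ n → a (n + 1) ≤ a n / 2) {M : ℝ} (hM : ∀ n, a n ≤ M) :
    ∑' n, a n ≤ (N + 2) * M := by
  have hsum := summable_of_ratio_le_half ha hN
  have hhead : ∑ n ∈ Finset.range N, a n ≤ N * M := by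
    simpa using Finset.sum_le_card_nsmul (Finset.range N) a M fun n _ => hM n
  have htail : ∑' k, a (k + N) ≤ 2 * M := by
    calc ∑' k, a (k + N) ≤ ∑' k, a N * (1 / 2) ^ k :=
          ((summable_nat_add_iff N).2 hsum).tsum_le_tsum (le_geometric_of_ratio_le_half hN)
            ((summable_geometric_two).mul_left _)
      _ = 2 * a N := by rw [tsum_mul_left, tsum_geometric_two, mul_comm]
      _ ≤ 2 * M := by linarith [hM N]
  rw [← hsum.sum_add_tsum_nat_add N]
  linarith

end RatioHalf

section FactorialPowerSeries

variable {γ s : ℝ}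

lemma pow_div_factorial_rpow_eq (hγ : γ ≠ 0) {x : ℝ} (hx : 0 ≤ x) (n : ℕ) :
    x ^ n / (n ! : ℝ) ^ γ = ((x ^ (1 / γ)) ^ n / n ! : ℝ) ^ γ := by
  rw [div_rpow (by positivity) (by positivity), ← rpow_natCast, ← rpow_natCast, ← rpow_mul
    (by positivity), mul_comm, rpow_mul (by positivity), one_div, rpow_inv_rpow hx hγ]

lemma pow_div_factorial_rpow_succ_le_half (hγ : 0 < γ) (hs : 0 ≤ s) {n : ℕ}
    (hn : 2 ^ (1 / γ) * s ≤ n + 1) :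
    (s ^ (n + 1) / (n + 1)! : ℝ) ^ γ ≤ (s ^ n / n ! : ℝ) ^ γ / 2 := by
  have hsucc : (s ^ (n + 1) / (n + 1)! : ℝ) = s ^ n / n ! * (s / (n + 1)) := by
    rw [Nat.factorial_succ]; push_cast; field_simp; ring
  have hratio : s / (n + 1) ≤ (1 / 2) ^ (1 / γ) := by
    rw [div_rpow zero_le_one zero_le_two, one_rpow, div_le_div_iff₀ (by positivity) (by positivity)]
    linarith
  have hratio' : (s / (n + 1)) ^ γ ≤ 1 / 2 := by
    calc (s / (n + 1)) ^ γ ≤ ((1 / 2 : ℝ) ^ (1 / γ)) ^ γ :=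
          rpow_le_rpow (by positivity) hratio hγ.le
      _ = 1 / 2 := by rw [← rpow_mul (by norm_num), one_div_mul_cancel hγ.ne', rpow_one]
  rw [hsucc, mul_rpow (by positivity) (by positivity)]
  have : 0 ≤ (s ^ n / n ! : ℝ) ^ γ := by positivity
  nlinarith

lemma pow_div_factorial_rpow_ratio_le_half (hγ : 0 < γ) (hs : 0 ≤ s) :
    ∀ n, ⌈2 ^ (1 / γ) * s⌉₊ ≤ n →
      (s ^ (n + 1) / (n + 1)! : ℝ) ^ γ ≤ (s ^ n / n ! : ℝ) ^ γ / 2 := fun n hn =>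
  pow_div_factorial_rpow_succ_le_half hγ hs
    (by linarith [Nat.le_ceil (2 ^ (1 / γ) * s), (Nat.cast_le (α := ℝ)).2 hn])

lemma summable_pow_div_factorial_rpow (hγ : 0 < γ) (hs : 0 ≤ s) :
    Summable fun n : ℕ => (s ^ n / n ! : ℝ) ^ γ :=
  summable_of_ratio_le_half (fun n => by positivity) (pow_div_factorial_rpow_ratio_le_half hγ hs)

lemma tsum_pow_div_factorial_rpow_le (hγ : 0 < γ) (hs : 0 ≤ s) :
    ∑' n : ℕ, (s ^ n / n ! : ℝ) ^ γ ≤ (2 ^ (1 / γ) * s + 3) * exp (γ * s) := by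
  have hterm (n : ℕ) : (s ^ n / n ! : ℝ) ^ γ ≤ exp (γ * s) := by
    rw [mul_comm, exp_mul]
    exact rpow_le_rpow (by positivity) (pow_div_factorial_le_exp s hs n) hγ.le
  have hceil : (⌈2 ^ (1 / γ) * s⌉₊ : ℝ) < 2 ^ (1 / γ) * s + 1 := Nat.ceil_lt_add_one (by positivity)
  calc ∑' n : ℕ, (s ^ n / n ! : ℝ) ^ γ ≤ (⌈2 ^ (1 / γ) * s⌉₊ + 2) * exp (γ * s) :=
        tsum_le_of_ratio_le_half (fun n => by positivity)
          (pow_div_factorial_rpow_ratio_le_half hγ hs) hterm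
    _ ≤ (2 ^ (1 / γ) * s + 3) * exp (γ * s) := by gcongr ?_ * _; linarith

lemma log_tsum_pow_div_factorial_rpow_le (hγ : 0 < γ) (hs : 0 ≤ s) :
    log (∑' n : ℕ, (s ^ n / n ! : ℝ) ^ γ) ≤ γ * s + log (2 ^ (1 / γ) * s + 3) := by
  have hpos : 0 < ∑' n : ℕ, (s ^ n / n ! : ℝ) ^ γ :=
    (summable_pow_div_factorial_rpow hγ hs).tsum_pos (fun n => by positivity) 0 (by simp)
  calc log (∑' n : ℕ, (s ^ n / n ! : ℝ) ^ γ)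
      ≤ log ((2 ^ (1 / γ) * s + 3) * exp (γ * s)) :=
        log_le_log hpos (tsum_pow_div_factorial_rpow_le hγ hs)
    _ = γ * s + log (2 ^ (1 / γ) * s + 3) := by
        rw [log_mul (by positivity) (exp_pos _).ne', log_exp, add_comm]

lemma le_log_tsum_pow_div_factorial_rpow (hγ : 0 < γ) (hs : 1 ≤ s) :
    γ * (s - log s - 2) ≤ log (∑' n : ℕ, (s ^ n / n ! : ℝ) ^ γ) := by
  have hs0 : 0 < s := by linarith
  calc γ * (s - log s - 2) ≤ γ * log (s ^ ⌊s⌋₊ / ⌊s⌋₊ !) :=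
        mul_le_mul_of_nonneg_left (sub_log_sub_two_le_log_pow_floor_div_factorial hs) hγ.le
    _ = log ((s ^ ⌊s⌋₊ / ⌊s⌋₊ ! : ℝ) ^ γ) := (log_rpow (by positivity) γ).symm
    _ ≤ log (∑' n : ℕ, (s ^ n / n ! : ℝ) ^ γ) :=
        log_le_log (by positivity) <| (summable_pow_div_factorial_rpow hγ hs0.le).le_tsum _
          fun n _ => by positivity

lemma tendsto_log_tsum_pow_div_factorial_rpow_div (hγ : 0 < γ) :
    Tendsto (fun s => log (∑' n : ℕ, (s ^ n / n ! : ℝ) ^ γ) / s) atTop (𝓝 γ) := by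
  have hlog : Tendsto (fun s => log s / s) atTop (𝓝 0) :=
    isLittleO_log_id_atTop.tendsto_div_nhds_zero
  have hlower : Tendsto (fun s => γ - γ * (log s / s + 2 * s⁻¹)) atTop (𝓝 γ) := by
    simpa using (hlog.add (tendsto_inv_atTop_zero.const_mul 2)).const_mul γ |>.const_sub γ
  have hupper : Tendsto (fun s => γ + log (2 ^ (1 / γ) * s + 3) / s) atTop (𝓝 γ) := by
    have hlin : Tendsto (fun s : ℝ => 2 ^ (1 / γ) * s + 3) atTop atTop :=
      tendsto_atTop_add_const_right _ 3 (tendsto_id.const_mul_atTop (by positivity))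
    have hslope : Tendsto (fun s : ℝ => 2 ^ (1 / γ) + 3 * s⁻¹) atTop (𝓝 (2 ^ (1 / γ))) := by
      simpa using tendsto_inv_atTop_zero.const_mul 3 |>.const_add (2 ^ (1 / γ) : ℝ)
    have h := ((hlog.comp hlin).mul hslope).const_add γ
    rw [zero_mul, add_zero] at h
    refine h.congr' ?_
    filter_upwards [eventually_gt_atTop 0] with s hs
    simp only [Function.comp_apply]
    field_simp
  refine tendsto_of_tendsto_of_tendsto_of_le_of_le' hlower hupper ?_ ?_
  · filter_upwards [eventually_ge_atTop 1] with s hs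
    rw [le_div_iff₀ (by linarith)]
    have hbound := le_log_tsum_pow_div_factorial_rpow hγ hs
    have hsplit : s * (log s / s + 2 * s⁻¹) = log s + 2 := by field_simp
    nlinarith
  · filter_upwards [eventually_gt_atTop 0] with s hs
    rw [div_le_iff₀ hs, add_mul, div_mul_cancel₀ _ hs.ne']
    linarith [log_tsum_pow_div_factorial_rpow_le hγ hs.le]

end FactorialPowerSeries

/-- Mittag-Leffler asymptotics: for `γ ∈ (0,∞)` and `θ > 0`,
`lim_{b→∞} b^{−1/γ} log ∑_{n≥0} θ^n b^n/(n!)^γ = γ θ^{1/γ}`. -/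
theorem statement9 (γ θ : ℝ) (hγ : 0 < γ) (hθ : 0 < θ) :
    Tendsto
      (fun b : ℝ =>
        b ^ (-(1 / γ)) * Real.log (∑' n : ℕ, θ ^ n * b ^ n / (n.factorial : ℝ) ^ γ))
      atTop (𝓝 (γ * θ ^ (1 / γ))) := by
  have hs : Tendsto (fun b : ℝ => (θ * b) ^ (1 / γ)) atTop atTop :=
    (tendsto_rpow_atTop (by positivity)).comp (tendsto_id.const_mul_atTop hθ)
  have h := ((tendsto_log_tsum_pow_div_factorial_rpow_div hγ).comp hs).const_mul (θ ^ (1 / γ))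
  rw [mul_comm] at h
  refine h.congr' ?_
  filter_upwards [eventually_gt_atTop 0] with b hb
  simp only [Function.comp_apply, ← mul_pow, pow_div_factorial_rpow_eq hγ.ne' (mul_pos hθ hb).le]
  rw [mul_rpow hθ.le hb.le, rpow_neg hb.le]
  field_simp
end

section
/- If Z ≥ 0 is a random variable satisfying the sub-multiplicative tail inequality P(Z ≥ a+b) ≤ P(Z ≥ a) P(Z ≥ b) for all a,b > 0, then for every integer n ≥ 1, E[Z^n] ≤ (e·E Z)^n (1 + e·n!). -/
open MeasureTheory Set Real
open scoped ENNReal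

set_option maxHeartbeats 2000000 in
/-- if `Z ≥ 0` has sub-multiplicative tails
`P(Z ≥ a+b) ≤ P(Z ≥ a) P(Z ≥ b)` (for `a, b > 0`) and `E Z < ∞`, then for every `n ≥ 1`,
`E[Z^n] ≤ (e·E Z)^n (1 + e·n!)`. -/
theorem statement15 {Ω : Type*} [MeasurableSpace Ω] (μ : Measure Ω) [IsProbabilityMeasure μ]
    (Z : Ω → ℝ) (hZm : Measurable Z) (hZ0 : ∀ ω, 0 ≤ Z ω) (hint : Integrable Z μ)
    (hsub : ∀ a b : ℝ, 0 < a → 0 < b →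
      μ {ω | a + b ≤ Z ω} ≤ μ {ω | a ≤ Z ω} * μ {ω | b ≤ Z ω})
    (n : ℕ) (hn : 1 ≤ n) :
    ∫⁻ ω, ENNReal.ofReal ((Z ω) ^ n) ∂μ
      ≤ ENNReal.ofReal
          ((Real.exp 1 * ∫ ω, Z ω ∂μ) ^ n * (1 + Real.exp 1 * n.factorial)) := by
  set I := ∫ ω, Z ω ∂μ with hI
  have hI0 : 0 ≤ I := integral_nonneg hZ0
  rcases hI0.eq_or_lt with hI0' | hIpos
  · -- degenerate case: `Z = 0` a.e.
    have hZ0ae : Z =ᵐ[μ] 0 := (integral_eq_zero_iff_of_nonneg hZ0 hint).mp hI0'.symm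
    have : ∫⁻ ω, ENNReal.ofReal ((Z ω) ^ n) ∂μ = 0 := by
      rw [lintegral_eq_zero_iff (by measurability)]
      filter_upwards [hZ0ae] with ω hω
      simp [hω, zero_pow (by omega : n ≠ 0)]
    simp [this]
  set m := Real.exp 1 * I with hm
  have hmpos : 0 < m := mul_pos (exp_pos 1) hIpos
  -- Markov's inequality: `μ {Z ≥ m} ≤ e⁻¹`
  have markov : μ {ω | m ≤ Z ω} ≤ ENNReal.ofReal (Real.exp (-1)) := by
    have key := mul_meas_ge_le_lintegral₀ (μ := μ)
      (f := fun ω => ENNReal.ofReal (Z ω)) (hZm.ennreal_ofReal.aemeasurable) (ENNReal.ofReal m)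
    have hset : {x | ENNReal.ofReal m ≤ ENNReal.ofReal (Z x)} = {ω | m ≤ Z ω} := by
      ext x; simp [ENNReal.ofReal_le_ofReal_iff (hZ0 x)]
    rw [hset] at key
    have hlint : ∫⁻ a, ENNReal.ofReal (Z a) ∂μ = ENNReal.ofReal I := by
      rw [hI, MeasureTheory.ofReal_integral_eq_lintegral_ofReal hint
        (Filter.Eventually.of_forall hZ0)]
    rw [hlint] at key
    have h2 : μ {ω | m ≤ Z ω} ≤ ENNReal.ofReal I / ENNReal.ofReal m := by
      rw [ENNReal.le_div_iff_mul_le (Or.inl (by simp [hmpos.ne.symm, hmpos]))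
        (Or.inl ENNReal.ofReal_ne_top), mul_comm]
      exact key
    refine h2.trans ?_
    rw [← ENNReal.ofReal_div_of_pos hmpos]
    apply ENNReal.ofReal_le_ofReal
    rw [hm, Real.exp_neg, div_mul_eq_div_div_swap, div_self hIpos.ne', one_div]
  -- iterated tail bound at integer multiples of `m`
  have tail_nat : ∀ k : ℕ,
      μ {ω | (k+1 : ℝ) * m ≤ Z ω} ≤ ENNReal.ofReal (Real.exp (-1)) ^ (k+1) := by
    intro k
    induction k with
    | zero => simpa using markov
    | succ k ih =>
      have hrw : ((k+1 : ℕ)+1 : ℝ) * m = m + ((k : ℝ)+1) * m := by push_cast; ring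
      rw [hrw]
      calc μ {ω | m + ((k:ℝ)+1) * m ≤ Z ω}
          ≤ μ {ω | m ≤ Z ω} * μ {ω | ((k:ℝ)+1) * m ≤ Z ω} :=
            hsub m (((k:ℝ)+1)*m) hmpos (by positivity)
        _ ≤ ENNReal.ofReal (Real.exp (-1)) ^ ((k+1)+1) := by
            rw [pow_succ']
            exact mul_le_mul' markov ih
  -- continuous tail bound
  have tail : ∀ t : ℝ, m ≤ t → μ {ω | t ≤ Z ω} ≤ ENNReal.ofReal (Real.exp (1 - t / m)) := by
    intro t ht
    have htm : 1 ≤ t / m := (one_le_div hmpos).mpr ht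
    obtain ⟨j, hj⟩ : ∃ j : ℕ, ⌊t / m⌋₊ = j + 1 :=
      ⟨⌊t / m⌋₊ - 1, by have : 1 ≤ ⌊t / m⌋₊ := Nat.le_floor (by exact_mod_cast htm); omega⟩
    set k := ⌊t / m⌋₊ with hk
    have hkle : (k : ℝ) ≤ t / m := Nat.floor_le (by linarith)
    have hklt : t / m < k + 1 := Nat.lt_floor_add_one _
    have hsubset : {ω | t ≤ Z ω} ⊆ {ω | (k : ℝ) * m ≤ Z ω} := by
      intro ω hω
      exact le_trans ((le_div_iff₀ hmpos).mp hkle) hω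
    rw [hj] at hkle hklt hsubset
    calc μ {ω | t ≤ Z ω} ≤ μ {ω | ((j:ℝ)+1) * m ≤ Z ω} := by
          apply measure_mono; convert hsubset using 3; push_cast; ring
      _ ≤ ENNReal.ofReal (Real.exp (-1)) ^ (j+1) := tail_nat j
      _ = ENNReal.ofReal (Real.exp (-1) ^ (j+1)) := by
          rw [ENNReal.ofReal_pow (exp_pos _).le]
      _ ≤ ENNReal.ofReal (Real.exp (1 - t / m)) := by
          apply ENNReal.ofReal_le_ofReal
          rw [← Real.exp_nat_mul]
          apply Real.exp_le_exp.mpr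
          push_cast at hklt ⊢
          nlinarith
  -- layer cake formula for the `n`-th moment
  have layer : ∫⁻ ω, ENNReal.ofReal ((Z ω) ^ n) ∂μ
      = ∫⁻ t in Ioi (0:ℝ), μ {ω | t ≤ Z ω} * ENNReal.ofReal ((n:ℝ) * t ^ (n-1)) := by
    have hcont : Continuous (fun t : ℝ => (n:ℝ) * t ^ (n-1)) := by continuity
    have key := lintegral_comp_eq_lintegral_meas_le_mul (f := Z)
      (g := fun t : ℝ => (n:ℝ) * t ^ (n-1)) μ (Filter.Eventually.of_forall hZ0)
      hZm.aemeasurable (fun t _ => hcont.intervalIntegrable _ _)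
      (by filter_upwards [ae_restrict_mem measurableSet_Ioi] with t ht
          have ht0 : 0 < t := ht
          positivity)
    rw [← key]
    apply lintegral_congr
    intro ω
    congr 1
    rw [intervalIntegral.integral_const_mul, integral_pow]
    have h1 : n - 1 + 1 = n := by omega
    rw [h1]
    field_simp
    rw [zero_pow (by omega : n ≠ 0), Nat.cast_sub hn, Nat.cast_one]; ring
  -- split the integral at `m`
  have split : ∫⁻ t in Ioi (0:ℝ), μ {ω | t ≤ Z ω} * ENNReal.ofReal ((n:ℝ) * t ^ (n-1))
      = (∫⁻ t in Ioc (0:ℝ) m, μ {ω | t ≤ Z ω} * ENNReal.ofReal ((n:ℝ) * t ^ (n-1)))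
        + ∫⁻ t in Ioi m, μ {ω | t ≤ Z ω} * ENNReal.ofReal ((n:ℝ) * t ^ (n-1)) := by
    rw [← Ioc_union_Ioi_eq_Ioi hmpos.le,
      lintegral_union measurableSet_Ioi (Ioc_disjoint_Ioi le_rfl)]
  -- the part near the origin
  have partA : (∫⁻ t in Ioc (0:ℝ) m, μ {ω | t ≤ Z ω} * ENNReal.ofReal ((n:ℝ) * t ^ (n-1)))
      ≤ ENNReal.ofReal (m ^ n) := by
    have hcont : Continuous (fun t : ℝ => (n:ℝ) * t ^ (n-1)) := by continuity
    calc (∫⁻ t in Ioc (0:ℝ) m, μ {ω | t ≤ Z ω} * ENNReal.ofReal ((n:ℝ) * t ^ (n-1)))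
        ≤ ∫⁻ t in Ioc (0:ℝ) m, ENNReal.ofReal ((n:ℝ) * t ^ (n-1)) := by
          apply lintegral_mono
          intro t
          calc μ {ω | t ≤ Z ω} * ENNReal.ofReal ((n:ℝ) * t ^ (n-1))
              ≤ 1 * ENNReal.ofReal ((n:ℝ) * t ^ (n-1)) := by gcongr; exact prob_le_one
            _ = _ := one_mul _
      _ = ENNReal.ofReal (∫ t in Ioc (0:ℝ) m, (n:ℝ) * t ^ (n-1)) := by
          rw [ofReal_integral_eq_lintegral_ofReal (hcont.integrableOn_Ioc)]
          filter_upwards [ae_restrict_mem measurableSet_Ioc] with t ht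
          have ht0 : 0 < t := ht.1
          positivity
      _ = ENNReal.ofReal (m ^ n) := by
          congr 1
          rw [← intervalIntegral.integral_of_le hmpos.le, intervalIntegral.integral_const_mul,
            integral_pow]
          have : n - 1 + 1 = n := by omega
          rw [this]
          field_simp
          rw [zero_pow (by omega : n ≠ 0), Nat.cast_sub hn, Nat.cast_one]; ring
  -- the tail part
  have partB : (∫⁻ t in Ioi m, μ {ω | t ≤ Z ω} * ENNReal.ofReal ((n:ℝ) * t ^ (n-1)))
      ≤ ENNReal.ofReal (Real.exp 1 * n.factorial * m ^ n) := by
    have hq : (-1 : ℝ) < (n:ℝ) - 1 := by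
      have : (1:ℝ) ≤ (n:ℝ) := by exact_mod_cast hn
      linarith
    have hb : (0:ℝ) < 1/m := by positivity
    have hintg : IntegrableOn
        (fun t : ℝ => t ^ ((n:ℝ)-1) * Real.exp (-(1/m) * t ^ (1:ℝ))) (Ioi 0) :=
      integrableOn_rpow_mul_exp_neg_mul_rpow hq one_pos hb
    calc (∫⁻ t in Ioi m, μ {ω | t ≤ Z ω} * ENNReal.ofReal ((n:ℝ) * t ^ (n-1)))
        ≤ ∫⁻ t in Ioi m, ENNReal.ofReal (Real.exp (1 - t / m) * ((n:ℝ) * t ^ (n-1))) := by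
          have hgc : Continuous fun t : ℝ => Real.exp (1 - t / m) * ((n:ℝ) * t ^ (n-1)) := by
            continuity
          apply setLIntegral_mono hgc.measurable.ennreal_ofReal (fun t ht => ?_)
          rw [ENNReal.ofReal_mul (exp_pos _).le]
          gcongr
          exact tail t (le_of_lt ht)
      _ ≤ ∫⁻ t in Ioi (0:ℝ), ENNReal.ofReal (Real.exp (1 - t / m) * ((n:ℝ) * t ^ (n-1))) :=
          lintegral_mono' (Measure.restrict_mono (Ioi_subset_Ioi hmpos.le) le_rfl) le_rfl
      _ = ∫⁻ t in Ioi (0:ℝ),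
            ENNReal.ofReal (((n:ℝ) * Real.exp 1)
              * (t ^ ((n:ℝ)-1) * Real.exp (-(1/m) * t ^ (1:ℝ)))) := by
          apply setLIntegral_congr_fun measurableSet_Ioi
          intro t ht
          beta_reduce
          congr 1
          have h1 : t ^ ((n:ℝ)-1) = t ^ (n-1 : ℕ) := by
            rw [show (n:ℝ)-1 = ((n-1 : ℕ):ℝ) by push_cast [hn]; ring, Real.rpow_natCast]
          rw [h1, Real.rpow_one, Real.exp_sub, show -(1/m) * t = -(t/m) by ring,
            Real.exp_neg, div_eq_mul_inv]
          ring
      _ = ENNReal.ofReal (∫ t in Ioi (0:ℝ),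
            ((n:ℝ) * Real.exp 1) * (t ^ ((n:ℝ)-1) * Real.exp (-(1/m) * t ^ (1:ℝ)))) := by
          rw [ofReal_integral_eq_lintegral_ofReal (hintg.const_mul _)]
          filter_upwards [ae_restrict_mem measurableSet_Ioi] with t ht
          have ht0 : 0 < t := ht
          positivity
      _ = ENNReal.ofReal (Real.exp 1 * n.factorial * m ^ n) := by
          congr 1
          rw [integral_const_mul, integral_rpow_mul_exp_neg_mul_rpow (by norm_num) hq hb]
          have h2 : ((n:ℝ) - 1 + 1) = (n:ℝ) := by ring
          rw [h2]
          have h3 : (1/m : ℝ) ^ (-(n:ℝ)/1) = m ^ n := by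
            rw [div_one, one_div, Real.inv_rpow hmpos.le, Real.rpow_neg hmpos.le,
              inv_inv, Real.rpow_natCast]
          have h4 : Real.Gamma (n:ℝ) = (n-1).factorial := by
            rw [show (n:ℝ) = ((n-1:ℕ):ℝ) + 1 by push_cast [hn]; ring,
              Real.Gamma_nat_eq_factorial]
          rw [h3, show ((n:ℝ)/1) = (n:ℝ) by ring, h4]
          have h5 : (n:ℝ) * (n-1).factorial = n.factorial := by
            rw [show n.factorial = n * (n-1).factorial by
              conv_lhs => rw [show n = (n-1)+1 by omega]
              rw [Nat.factorial_succ]; congr 1; omega]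
            push_cast
            ring
          rw [← h5]
          ring
  calc ∫⁻ ω, ENNReal.ofReal ((Z ω) ^ n) ∂μ
      ≤ ENNReal.ofReal (m ^ n) + ENNReal.ofReal (Real.exp 1 * n.factorial * m ^ n) := by
        rw [layer, split]; exact add_le_add partA partB
    _ = ENNReal.ofReal (m ^ n * (1 + Real.exp 1 * n.factorial)) := by
        rw [← ENNReal.ofReal_add (by positivity) (by positivity)]; ring_nf
    _ ≤ _ := le_rfl
end

section
/- Let B₁, B₂ be independent d-dimensional Brownian motions and γ a nonnegative, nonnegative-definite covariance function for which the intersection local times below are defined. Then pathwise ∫_0^t∫_0^t γ(B₁(s)−B₂(r)) ds dr ≤ (∫_0^t∫_0^t γ(B₁(s)−B₁(r)) ds dr)^{1/2} · (∫_0^t∫_0^t γ(B₂(s)−B₂(r)) ds dr)^{1/2}, and consequently E₀[(∫_0^t∫_0^t γ(B₁(s)−B₂(r)) ds dr)^n] ≤ E₀[(∫_0^t∫_0^t γ(B(s)−B(r)) ds dr)^n] for every n ≥ 1. -/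
/-!
Write `γ = Re (charFun μ)` for the spectral measure `μ`. By Fubini, for finite measures `ρ₁, ρ₂`,
`∫∫ γ (x - y) dρ₁ dρ₂ = Re ∫ φ₁ · conj φ₂ dμ` with `φᵢ` the characteristic function of `ρᵢ`, so
this is a positive semidefinite form in `(ρ₁, ρ₂)` and satisfies Cauchy–Schwarz. Applied to the
occupation measures `ν.map bᵢ` of two paths, it gives the pathwise inequality. Raising it to the
power `n` and applying Cauchy–Schwarz on `Ω` bounds the mixed moment by the geometric mean of the
self-intersection moments of `B₁` and `B₂`, and these agree: expanding the `n`-th power as an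
integral over `(s, r)ⁿ` reduces them to finite-dimensional distributions.
-/

open MeasureTheory ProbabilityTheory Set
open scoped InnerProductSpace ENNReal ComplexConjugate

theorem integral_mul_le_sqrt_mul_sqrt {α : Type*} [MeasurableSpace α] {μ : Measure α}
    {f g : α → ℝ} (hf₀ : 0 ≤ᵐ[μ] f) (hg₀ : 0 ≤ᵐ[μ] g) (hf : MemLp f 2 μ) (hg : MemLp g 2 μ) :
    ∫ a, f a * g a ∂μ ≤ √(∫ a, f a ^ 2 ∂μ) * √(∫ a, g a ^ 2 ∂μ) := by
  have h := integral_mul_le_Lp_mul_Lq_of_nonneg Real.HolderConjugate.two_two hf₀ hg₀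
    (by simpa using hf) (by simpa using hg)
  simpa only [Real.sqrt_eq_rpow, Real.rpow_two] using h

section Moments

variable {Ω : Type*} [MeasurableSpace Ω] {P : Measure Ω}

/-- `x ↦ ∫ z, f x z ∂ρ` need not be measurable (e.g. on path space with the product σ-algebra),
so the `n`-th power is expanded as an integral over `βⁿ` of `x ↦ ∏ i, f x (v i)`, to which `hX`
applies for each fixed `v`. -/
theorem integral_pow_integral_eq_of_identDistrib [IsFiniteMeasure P] {S β : Type*}
    [MeasurableSpace S] [MeasurableSpace β] {ρ : Measure β} [IsFiniteMeasure ρ]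
    {X₁ X₂ : Ω → S} (hX : IdentDistrib X₁ X₂ P P) {f : S → β → ℝ}
    (hf : ∀ z, Measurable fun x ↦ f x z) (hf₁ : Measurable fun q : Ω × β ↦ f (X₁ q.1) q.2)
    (hf₂ : Measurable fun q : Ω × β ↦ f (X₂ q.1) q.2) {C : ℝ} (hC : ∀ x z, |f x z| ≤ C)
    (n : ℕ) :
    ∫ ω, (∫ z, f (X₁ ω) z ∂ρ) ^ n ∂P = ∫ ω, (∫ z, f (X₂ ω) z ∂ρ) ^ n ∂P := by
  have hpow : ∀ g : β → ℝ,
      (∫ z, g z ∂ρ) ^ n = ∫ v : Fin n → β, ∏ i, g (v i) ∂(Measure.pi fun _ ↦ ρ) := fun g ↦ by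
    rw [integral_fintype_prod_eq_pow, Fintype.card_fin]
  have hexpand : ∀ X : Ω → S, Measurable (fun q : Ω × β ↦ f (X q.1) q.2) →
      ∫ ω, (∫ z, f (X ω) z ∂ρ) ^ n ∂P
        = ∫ v : Fin n → β, ∫ ω, ∏ i, f (X ω) (v i) ∂P ∂(Measure.pi fun _ ↦ ρ) := by
    intro X hXf
    simp only [hpow]
    refine integral_integral_swap (.of_bound (Finset.measurable_prod _ fun i _ ↦
      hXf.comp (measurable_fst.prodMk ((measurable_pi_apply i).comp measurable_snd))
      ).aestronglyMeasurable (C ^ n) (ae_of_all _ fun q ↦ ?_))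
    rw [Real.norm_eq_abs, Function.uncurry_def, Finset.abs_prod]
    exact (Finset.prod_le_prod (fun _ _ ↦ abs_nonneg _) fun i _ ↦ hC _ _).trans_eq (by simp)
  rw [hexpand X₁ hf₁, hexpand X₂ hf₂]
  congr 1 with v
  exact (hX.comp (Finset.measurable_prod _ fun i _ ↦ hf (v i))).integral_eq

theorem integral_pow_le_of_abs_le_sqrt_mul_sqrt {X Y₁ Y₂ : Ω → ℝ} (n : ℕ)
    (hX : AEStronglyMeasurable X P) (hY₁ : AEStronglyMeasurable Y₁ P)
    (hY₂ : AEStronglyMeasurable Y₂ P) (hY₁₀ : ∀ ω, 0 ≤ Y₁ ω) (hY₂₀ : ∀ ω, 0 ≤ Y₂ ω)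
    (hXY : ∀ ω, |X ω| ≤ √(Y₁ ω) * √(Y₂ ω)) (hi₁ : Integrable (fun ω ↦ Y₁ ω ^ n) P)
    (hi₂ : Integrable (fun ω ↦ Y₂ ω ^ n) P) (heq : ∫ ω, Y₁ ω ^ n ∂P = ∫ ω, Y₂ ω ^ n ∂P) :
    ∫ ω, X ω ^ n ∂P ≤ ∫ ω, Y₁ ω ^ n ∂P := by
  have hsq : ∀ {Y : Ω → ℝ}, (∀ ω, 0 ≤ Y ω) → ∀ ω, (√(Y ω) ^ n) ^ 2 = Y ω ^ n :=
    fun hY₀ ω ↦ by rw [← pow_mul, mul_comm, pow_mul, Real.sq_sqrt (hY₀ ω)]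
  have hL2 : ∀ {Y : Ω → ℝ}, AEStronglyMeasurable Y P → (∀ ω, 0 ≤ Y ω) →
      Integrable (fun ω ↦ Y ω ^ n) P → MemLp (fun ω ↦ √(Y ω) ^ n) 2 P :=
    fun hY hY₀ hi ↦
      (memLp_two_iff_integrable_sq (by fun_prop)).2 (by simpa only [hsq hY₀] using hi)
  have hprod : Integrable (fun ω ↦ √(Y₁ ω) ^ n * √(Y₂ ω) ^ n) P :=
    (hL2 hY₁ hY₁₀ hi₁).integrable_mul (hL2 hY₂ hY₂₀ hi₂)
  have hdom : ∀ ω, ‖X ω ^ n‖ ≤ √(Y₁ ω) ^ n * √(Y₂ ω) ^ n := fun ω ↦ by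
    rw [norm_pow, Real.norm_eq_abs, ← mul_pow]
    exact pow_le_pow_left₀ (abs_nonneg _) (hXY ω) n
  calc ∫ ω, X ω ^ n ∂P
      ≤ ∫ ω, √(Y₁ ω) ^ n * √(Y₂ ω) ^ n ∂P :=
        integral_mono (hprod.mono' (hX.pow n) (ae_of_all _ hdom)) hprod
          fun ω ↦ (Real.le_norm_self _).trans (hdom ω)
    _ ≤ √(∫ ω, (√(Y₁ ω) ^ n) ^ 2 ∂P) * √(∫ ω, (√(Y₂ ω) ^ n) ^ 2 ∂P) :=
        integral_mul_le_sqrt_mul_sqrt (ae_of_all _ fun _ ↦ by positivity)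
          (ae_of_all _ fun _ ↦ by positivity) (hL2 hY₁ hY₁₀ hi₁) (hL2 hY₂ hY₂₀ hi₂)
    _ = ∫ ω, Y₁ ω ^ n ∂P := by
        simp only [hsq hY₁₀, hsq hY₂₀, ← heq]
        exact Real.mul_self_sqrt (integral_nonneg fun ω ↦ pow_nonneg (hY₁₀ ω) n)

end Moments

section CharFun

variable {E : Type*} [NormedAddCommGroup E] [InnerProductSpace ℝ E] [MeasurableSpace E]
  [BorelSpace E] [SecondCountableTopology E]

theorem re_charFun_eq_integral_cos (μ : Measure E) [IsFiniteMeasure μ] (x : E) :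
    (charFun μ x).re = ∫ ξ, Real.cos ⟪ξ, x⟫_ℝ ∂μ := by
  have h : Integrable (fun ξ : E ↦ Complex.exp (⟪ξ, x⟫_ℝ * Complex.I)) μ :=
    (integrable_const (1 : ℝ)).mono (by fun_prop)
      (ae_of_all _ fun _ ↦ by simp [Complex.norm_exp_ofReal_mul_I])
  refine (integral_re h).symm.trans ?_
  simp only [RCLike.re_to_complex, Complex.exp_ofReal_mul_I_re]

theorem integral_charFun_comm (μ ρ : Measure E) [IsFiniteMeasure μ] [IsFiniteMeasure ρ] :
    ∫ x, charFun μ x ∂ρ = ∫ ξ, charFun ρ ξ ∂μ := by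
  simp only [charFun_apply]
  rw [integral_integral_swap ((integrable_const (1 : ℝ)).mono (by fun_prop)
    (ae_of_all _ fun _ ↦ by simp [Function.uncurry_def, Complex.norm_exp_ofReal_mul_I]))]
  simp only [real_inner_comm]

theorem charFun_map_sub_prod_eq_mul_conj (ρ₁ ρ₂ : Measure E) [IsFiniteMeasure ρ₁]
    [IsFiniteMeasure ρ₂] (ξ : E) :
    charFun ((ρ₁.prod ρ₂).map fun p ↦ p.1 - p.2) ξ = charFun ρ₁ ξ * conj (charFun ρ₂ ξ) := by
  have h : ∀ x y : E, Complex.exp (⟪x - y, ξ⟫_ℝ * Complex.I)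
      = Complex.exp (⟪x, ξ⟫_ℝ * Complex.I) * Complex.exp (⟪y, -ξ⟫_ℝ * Complex.I) := by
    intro x y
    rw [← Complex.exp_add, inner_sub_left, inner_neg_right]
    push_cast
    ring_nf
  rw [← charFun_neg]
  simp only [charFun_apply]
  rw [integral_map (by fun_prop) (by fun_prop)]
  simp only [h]
  exact integral_prod_mul (fun x ↦ Complex.exp (⟪x, ξ⟫_ℝ * Complex.I))
    (fun y ↦ Complex.exp (⟪y, -ξ⟫_ℝ * Complex.I))

variable (μ : Measure E) [IsFiniteMeasure μ]

theorem integral_re_charFun_sub_prod (ρ₁ ρ₂ : Measure E) [IsFiniteMeasure ρ₁]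
    [IsFiniteMeasure ρ₂] :
    ∫ p, (charFun μ (p.1 - p.2)).re ∂(ρ₁.prod ρ₂)
      = (∫ ξ, charFun ρ₁ ξ * conj (charFun ρ₂ ξ) ∂μ).re := by
  refine (integral_re (Integrable.of_bound (by fun_prop) _
    (ae_of_all _ fun _ ↦ norm_charFun_le _))).trans ?_
  rw [← integral_map (by fun_prop) continuous_charFun.aestronglyMeasurable,
    integral_charFun_comm]
  simp only [charFun_map_sub_prod_eq_mul_conj]
  rfl

theorem integral_re_charFun_sub_prod_self (ρ : Measure E) [IsFiniteMeasure ρ] :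
    ∫ p, (charFun μ (p.1 - p.2)).re ∂(ρ.prod ρ) = ∫ ξ, ‖charFun ρ ξ‖ ^ 2 ∂μ := by
  simp only [integral_re_charFun_sub_prod, Complex.mul_conj, Complex.normSq_eq_norm_sq]
  norm_cast

theorem memLp_norm_charFun (ρ : Measure E) [IsFiniteMeasure ρ] (p : ℝ≥0∞) :
    MemLp (fun ξ ↦ ‖charFun ρ ξ‖) p μ :=
  .of_bound (by fun_prop) _ (ae_of_all _ fun ξ ↦ (norm_norm _).trans_le (norm_charFun_le ξ))

theorem abs_integral_re_charFun_sub_prod_le (ρ₁ ρ₂ : Measure E) [IsFiniteMeasure ρ₁]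
    [IsFiniteMeasure ρ₂] :
    |∫ p, (charFun μ (p.1 - p.2)).re ∂(ρ₁.prod ρ₂)|
      ≤ √(∫ p, (charFun μ (p.1 - p.2)).re ∂(ρ₁.prod ρ₁))
        * √(∫ p, (charFun μ (p.1 - p.2)).re ∂(ρ₂.prod ρ₂)) := by
  rw [integral_re_charFun_sub_prod_self, integral_re_charFun_sub_prod_self,
    integral_re_charFun_sub_prod]
  calc |(∫ ξ, charFun ρ₁ ξ * conj (charFun ρ₂ ξ) ∂μ).re|
      ≤ ∫ ξ, ‖charFun ρ₁ ξ‖ * ‖charFun ρ₂ ξ‖ ∂μ :=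
        (Complex.abs_re_le_norm _).trans <| (norm_integral_le_integral_norm _).trans_eq <| by
          simp only [norm_mul, Complex.norm_conj]
    _ ≤ _ := integral_mul_le_sqrt_mul_sqrt (ae_of_all _ fun _ ↦ norm_nonneg _)
        (ae_of_all _ fun _ ↦ norm_nonneg _) (memLp_norm_charFun μ ρ₁ 2)
        (memLp_norm_charFun μ ρ₂ 2)

end CharFun

section Paths

variable {E : Type*} [NormedAddCommGroup E] [InnerProductSpace ℝ E] [MeasurableSpace E]
  [BorelSpace E] [SecondCountableTopology E] (μ : Measure E) [IsFiniteMeasure μ]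
  {α : Type*} [MeasurableSpace α] (ν : Measure α) [IsFiniteMeasure ν]

theorem integral_integral_re_charFun_sub_eq_integral_prod {b₁ b₂ : α → E}
    (hb₁ : Measurable b₁) (hb₂ : Measurable b₂) :
    ∫ s, ∫ r, (charFun μ (b₁ s - b₂ r)).re ∂ν ∂ν
      = ∫ z, (charFun μ (b₁ z.1 - b₂ z.2)).re ∂(ν.prod ν) :=
  integral_integral (.of_bound (by fun_prop) _
    (ae_of_all _ fun _ ↦ (Complex.abs_re_le_norm _).trans (norm_charFun_le _)))

theorem integral_integral_re_charFun_sub_eq_integral_map_prod {b₁ b₂ : α → E}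
    (hb₁ : Measurable b₁) (hb₂ : Measurable b₂) :
    ∫ s, ∫ r, (charFun μ (b₁ s - b₂ r)).re ∂ν ∂ν
      = ∫ p, (charFun μ (p.1 - p.2)).re ∂((ν.map b₁).prod (ν.map b₂)) := by
  rw [integral_integral_re_charFun_sub_eq_integral_prod μ ν hb₁ hb₂,
    Measure.map_prod_map _ _ hb₁ hb₂, integral_map (by fun_prop) (by fun_prop)]
  rfl

theorem integral_integral_re_charFun_sub_self_nonneg {b : α → E} (hb : Measurable b) :
    0 ≤ ∫ s, ∫ r, (charFun μ (b s - b r)).re ∂ν ∂ν := by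
  rw [integral_integral_re_charFun_sub_eq_integral_map_prod μ ν hb hb,
    integral_re_charFun_sub_prod_self]
  positivity

theorem abs_integral_integral_re_charFun_sub_le {b₁ b₂ : α → E}
    (hb₁ : Measurable b₁) (hb₂ : Measurable b₂) :
    |∫ s, ∫ r, (charFun μ (b₁ s - b₂ r)).re ∂ν ∂ν|
      ≤ √(∫ s, ∫ r, (charFun μ (b₁ s - b₁ r)).re ∂ν ∂ν)
        * √(∫ s, ∫ r, (charFun μ (b₂ s - b₂ r)).re ∂ν ∂ν) := by
  rw [integral_integral_re_charFun_sub_eq_integral_map_prod μ ν hb₁ hb₂,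
    integral_integral_re_charFun_sub_eq_integral_map_prod μ ν hb₁ hb₁,
    integral_integral_re_charFun_sub_eq_integral_map_prod μ ν hb₂ hb₂]
  exact abs_integral_re_charFun_sub_prod_le μ _ _

variable {Ω : Type*} [MeasurableSpace Ω]

theorem measurable_integral_integral_re_charFun_sub {A₁ A₂ : Ω → α → E}
    (hA₁ : Measurable fun q : Ω × α ↦ A₁ q.1 q.2) (hA₂ : Measurable fun q : Ω × α ↦ A₂ q.1 q.2) :
    Measurable fun ω ↦ ∫ s, ∫ r, (charFun μ (A₁ ω s - A₂ ω r)).re ∂ν ∂ν := by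
  have h : StronglyMeasurable fun q : (Ω × α) × α ↦
      (charFun μ (A₁ q.1.1 q.1.2 - A₂ q.1.1 q.2)).re :=
    (Complex.measurable_re.comp (measurable_charFun.comp ((hA₁.comp measurable_fst).sub
      (hA₂.comp (measurable_fst.fst.prodMk measurable_snd))))).stronglyMeasurable
  exact h.integral_prod_right'.integral_prod_right'.measurable

theorem integrable_pow_integral_integral_re_charFun_sub {P : Measure Ω} [IsFiniteMeasure P]
    {A₁ A₂ : Ω → α → E} (hA₁ : Measurable fun q : Ω × α ↦ A₁ q.1 q.2)
    (hA₂ : Measurable fun q : Ω × α ↦ A₂ q.1 q.2) (n : ℕ) :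
    Integrable (fun ω ↦ (∫ s, ∫ r, (charFun μ (A₁ ω s - A₂ ω r)).re ∂ν ∂ν) ^ n) P := by
  have hbound : ∀ ω, ‖∫ s, ∫ r, (charFun μ (A₁ ω s - A₂ ω r)).re ∂ν ∂ν‖
      ≤ μ.real univ * ν.real univ * ν.real univ := fun ω ↦
    norm_integral_le_of_norm_le_const <| ae_of_all _ fun _ ↦
      norm_integral_le_of_norm_le_const <| ae_of_all _ fun _ ↦
        (Complex.abs_re_le_norm _).trans (norm_charFun_le _)
  refine .of_bound ((measurable_integral_integral_re_charFun_sub μ ν hA₁ hA₂).pow_const n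
    ).aestronglyMeasurable ((μ.real univ * ν.real univ * ν.real univ) ^ n)
    (ae_of_all _ fun ω ↦ ?_)
  rw [norm_pow]
  exact pow_le_pow_left₀ (norm_nonneg _) (hbound ω) n

theorem integral_pow_integral_integral_re_charFun_sub_self_eq {P : Measure Ω} [IsFiniteMeasure P]
    {A₁ A₂ : Ω → α → E} (hA : IdentDistrib A₁ A₂ P P)
    (hA₁ : Measurable fun q : Ω × α ↦ A₁ q.1 q.2) (hA₂ : Measurable fun q : Ω × α ↦ A₂ q.1 q.2)
    (n : ℕ) :
    ∫ ω, (∫ s, ∫ r, (charFun μ (A₁ ω s - A₁ ω r)).re ∂ν ∂ν) ^ n ∂P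
      = ∫ ω, (∫ s, ∫ r, (charFun μ (A₂ ω s - A₂ ω r)).re ∂ν ∂ν) ^ n ∂P := by
  have hmeas : ∀ A : Ω → α → E, (Measurable fun q : Ω × α ↦ A q.1 q.2) →
      Measurable fun q : Ω × (α × α) ↦ (charFun μ (A q.1 q.2.1 - A q.1 q.2.2)).re :=
    fun A hA ↦ Complex.measurable_re.comp (measurable_charFun.comp
      ((hA.comp (measurable_fst.prodMk measurable_snd.fst)).sub
        (hA.comp (measurable_fst.prodMk measurable_snd.snd))))
  have hprod : ∀ A : Ω → α → E, (Measurable fun q : Ω × α ↦ A q.1 q.2) → ∀ ω,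
      ∫ s, ∫ r, (charFun μ (A ω s - A ω r)).re ∂ν ∂ν
        = ∫ z, (charFun μ (A ω z.1 - A ω z.2)).re ∂(ν.prod ν) := fun A hA ω ↦
    integral_integral_re_charFun_sub_eq_integral_prod μ ν (hA.comp measurable_prodMk_left)
      (hA.comp measurable_prodMk_left)
  simp only [hprod A₁ hA₁, hprod A₂ hA₂]
  exact integral_pow_integral_eq_of_identDistrib hA
    (f := fun b (z : α × α) ↦ (charFun μ (b z.1 - b z.2)).re)
    (fun _ ↦ by fun_prop) (hmeas A₁ hA₁) (hmeas A₂ hA₂)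
    (fun _ _ ↦ (Complex.abs_re_le_norm _).trans (norm_charFun_le _)) n

end Paths

theorem statement16_general (d : ℕ) {Ω : Type*} [MeasureSpace Ω]
    [IsProbabilityMeasure (ℙ : Measure Ω)]
    (μspec : Measure (EuclideanSpace ℝ (Fin d))) [IsFiniteMeasure μspec]
    (γ : EuclideanSpace ℝ (Fin d) → ℝ)
    (hγ : ∀ x, γ x = ∫ ξ, Real.cos ⟪ξ, x⟫_ℝ ∂μspec)
    (B₁ B₂ : Ω → ℝ → EuclideanSpace ℝ (Fin d))
    (hB₁ : Measurable fun q : Ω × ℝ => B₁ q.1 q.2)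
    (hB₂ : Measurable fun q : Ω × ℝ => B₂ q.1 q.2)
    (hid : IdentDistrib B₁ B₂ ℙ ℙ)
    (t : ℝ) (n : ℕ) :
    (∀ b₁ b₂ : ℝ → EuclideanSpace ℝ (Fin d), Measurable b₁ → Measurable b₂ →
      ∫ s in Icc (0 : ℝ) t, ∫ r in Icc (0 : ℝ) t, γ (b₁ s - b₂ r)
        ≤ Real.sqrt (∫ s in Icc (0 : ℝ) t, ∫ r in Icc (0 : ℝ) t, γ (b₁ s - b₁ r)) *
            Real.sqrt (∫ s in Icc (0 : ℝ) t, ∫ r in Icc (0 : ℝ) t, γ (b₂ s - b₂ r))) ∧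
    ∫ ω, (∫ s in Icc (0 : ℝ) t, ∫ r in Icc (0 : ℝ) t, γ (B₁ ω s - B₂ ω r)) ^ n ∂ℙ
      ≤ ∫ ω, (∫ s in Icc (0 : ℝ) t, ∫ r in Icc (0 : ℝ) t, γ (B₁ ω s - B₁ ω r)) ^ n ∂ℙ := by
  obtain rfl : γ = fun x ↦ (charFun μspec x).re :=
    funext fun x ↦ (hγ x).trans (re_charFun_eq_integral_cos μspec x).symm
  set ν := volume.restrict (Icc (0 : ℝ) t)
  have hpath₁ : ∀ ω, Measurable (B₁ ω) := fun _ ↦ hB₁.comp measurable_prodMk_left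
  have hpath₂ : ∀ ω, Measurable (B₂ ω) := fun _ ↦ hB₂.comp measurable_prodMk_left
  refine ⟨fun b₁ b₂ hb₁ hb₂ ↦
    (le_abs_self _).trans (abs_integral_integral_re_charFun_sub_le μspec ν hb₁ hb₂), ?_⟩
  exact integral_pow_le_of_abs_le_sqrt_mul_sqrt n
    (measurable_integral_integral_re_charFun_sub μspec ν hB₁ hB₂).aestronglyMeasurable
    (measurable_integral_integral_re_charFun_sub μspec ν hB₁ hB₁).aestronglyMeasurable
    (measurable_integral_integral_re_charFun_sub μspec ν hB₂ hB₂).aestronglyMeasurable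
    (fun ω ↦ integral_integral_re_charFun_sub_self_nonneg μspec ν (hpath₁ ω))
    (fun ω ↦ integral_integral_re_charFun_sub_self_nonneg μspec ν (hpath₂ ω))
    (fun ω ↦ abs_integral_integral_re_charFun_sub_le μspec ν (hpath₁ ω) (hpath₂ ω))
    (integrable_pow_integral_integral_re_charFun_sub μspec ν hB₁ hB₁ n)
    (integrable_pow_integral_integral_re_charFun_sub μspec ν hB₂ hB₂ n)
    (integral_pow_integral_integral_re_charFun_sub_self_eq μspec ν hid hB₁ hB₂ n)

/-- let `B₁, B₂` be independent (identically distributed) `d`-dimensional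
Brownian motions and `γ ≥ 0` a covariance function with spectral representation
`γ(x) = ∫ cos⟪ξ,x⟫ μspec(dξ)`.  Then pathwise
`∫₀ᵗ∫₀ᵗ γ(b₁(s)−b₂(r)) ≤ (∫₀ᵗ∫₀ᵗ γ(b₁(s)−b₁(r)))^{1/2} (∫₀ᵗ∫₀ᵗ γ(b₂(s)−b₂(r)))^{1/2}`,
and consequently `E[(∫₀ᵗ∫₀ᵗ γ(B₁(s)−B₂(r)))ⁿ] ≤ E[(∫₀ᵗ∫₀ᵗ γ(B(s)−B(r)))ⁿ]` for all `n ≥ 1`. -/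
theorem statement16 (d : ℕ) {Ω : Type*} [MeasureSpace Ω]
    [IsProbabilityMeasure (ℙ : Measure Ω)]
    (μspec : Measure (EuclideanSpace ℝ (Fin d))) [IsFiniteMeasure μspec]
    (γ : EuclideanSpace ℝ (Fin d) → ℝ) (hγm : Measurable γ) (hγ0 : ∀ x, 0 ≤ γ x)
    (hγ : ∀ x, γ x = ∫ ξ, Real.cos ⟪ξ, x⟫_ℝ ∂μspec)
    (B₁ B₂ : Ω → ℝ → EuclideanSpace ℝ (Fin d))
    (hB₁ : Measurable fun q : Ω × ℝ => B₁ q.1 q.2)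
    (hB₂ : Measurable fun q : Ω × ℝ => B₂ q.1 q.2)
    (hindep : IndepFun B₁ B₂ ℙ) (hid : IdentDistrib B₁ B₂ ℙ ℙ)
    (t : ℝ) (ht : 0 < t) (n : ℕ) (hn : 1 ≤ n) :
    (∀ b₁ b₂ : ℝ → EuclideanSpace ℝ (Fin d), Measurable b₁ → Measurable b₂ →
      ∫ s in Icc (0 : ℝ) t, ∫ r in Icc (0 : ℝ) t, γ (b₁ s - b₂ r)
        ≤ Real.sqrt (∫ s in Icc (0 : ℝ) t, ∫ r in Icc (0 : ℝ) t, γ (b₁ s - b₁ r)) *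
            Real.sqrt (∫ s in Icc (0 : ℝ) t, ∫ r in Icc (0 : ℝ) t, γ (b₂ s - b₂ r))) ∧
    ∫ ω, (∫ s in Icc (0 : ℝ) t, ∫ r in Icc (0 : ℝ) t, γ (B₁ ω s - B₂ ω r)) ^ n ∂ℙ
      ≤ ∫ ω, (∫ s in Icc (0 : ℝ) t, ∫ r in Icc (0 : ℝ) t, γ (B₁ ω s - B₁ ω r)) ^ n ∂ℙ :=
  statement16_general d μspec γ hγ B₁ B₂ hB₁ hB₂ hid t n
end
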